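/- arXiv:2001.09978 — 2 statements merged into one kernel-verified Lean document; each statement's English description precedes it below -/
import Mathlib

section
/- Let F ⊆ S, M̃ the truncated operator for F, Q^k = M̃^k(0), and Q*(s) = lim_k Q^k(s) (which exists for every s). Then Q* is a fixed point of M̃: (M̃ Q*)(s) = Q*(s) for all s ∈ S. -/
/-!
Every layer of the minimax operator — averaging against a probability vector, the infimum over
the adversary's actions, the supremum over the simplex — preserves an inequality `f ≤ g + ε`.
Hence each coordinate of `M̃` is `1`-Lipschitz for the sup norm on `S → ℝ`, so `M̃` is continuous,
and the limit of the iterates `M̃^k 0` is a fixed point of `M̃`.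
-/

open Finset Filter Topology

/-- The standard probability simplex on a finite type `A`. -/
def simplexSet (A : Type*) [Fintype A] : Set (A → ℝ) :=
  {μ | (∀ a, 0 ≤ μ a) ∧ ∑ a, μ a = 1}

/-- The minimax Bellman operator:
`(M Q)(s) = sup_{μ ∈ simplex} inf_{b ∈ B} ∑_a μ(a) * ∑_{s'} P s a b s' * Q s'`. -/
noncomputable def Mop {S A B : Type*} [Fintype S] [Fintype A] [Fintype B]
    (P : S → A → B → S → ℝ) (Q : S → ℝ) (s : S) : ℝ :=
  sSup ((fun μ : A → ℝ => ⨅ b : B, ∑ a, μ a * ∑ s', P s a b s' * Q s') '' simplexSet A)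

open Classical in
/-- The truncated minimax Bellman operator for an accepting set `F`. -/
noncomputable def Mtrunc {S A B : Type*} [Fintype S] [Fintype A] [Fintype B]
    (P : S → A → B → S → ℝ) (F : Set S) (Q : S → ℝ) (s : S) : ℝ :=
  if s ∈ F then 1 else Mop P Q s

/-- The policy-evaluation operator for a stationary defender policy `μ`. -/
noncomputable def Mpol {S A B : Type*} [Fintype S] [Fintype A] [Fintype B]
    (P : S → A → B → S → ℝ) (μ : S → A → ℝ) (Q : S → ℝ) (s : S) : ℝ :=
  ⨅ b : B, ∑ a, μ s a * ∑ s', P s a b s' * Q s'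

open Classical in
/-- The truncated policy-evaluation operator for an accepting set `F`. -/
noncomputable def MpolTrunc {S A B : Type*} [Fintype S] [Fintype A] [Fintype B]
    (P : S → A → B → S → ℝ) (μ : S → A → ℝ) (F : Set S) (Q : S → ℝ) (s : S) : ℝ :=
  if s ∈ F then 1 else Mpol P μ Q s

theorem sum_mul_le_sum_mul_add {ι : Type*} [Fintype ι] {w x y : ι → ℝ} {ε : ℝ}
    (hw0 : ∀ i, 0 ≤ w i) (hw1 : ∑ i, w i = 1) (h : ∀ i, x i ≤ y i + ε) :
    ∑ i, w i * x i ≤ ∑ i, w i * y i + ε :=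
  calc ∑ i, w i * x i ≤ ∑ i, w i * (y i + ε) :=
        sum_le_sum fun i _ => mul_le_mul_of_nonneg_left (h i) (hw0 i)
    _ = ∑ i, w i * y i + ε := by simp only [mul_add, sum_add_distrib, ← sum_mul, hw1, one_mul]

theorem csSup_image_le_csSup_image_add {α : Type*} {s : Set α} {f g : α → ℝ} {ε : ℝ}
    (hs : s.Nonempty) (hg : BddAbove (g '' s)) (h : ∀ x ∈ s, f x ≤ g x + ε) :
    sSup (f '' s) ≤ sSup (g '' s) + ε :=
  csSup_le (hs.image f) <| by
    rintro _ ⟨x, hx, rfl⟩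
    exact (h x hx).trans (by gcongr; exact le_csSup hg ⟨x, hx, rfl⟩)

theorem simplexSet_nonempty (A : Type*) [Fintype A] [Nonempty A] : (simplexSet A).Nonempty := by
  classical
  obtain ⟨a⟩ := ‹Nonempty A›
  exact ⟨Pi.single a 1, (Pi.single_nonneg.2 zero_le_one : (0 : A → ℝ) ≤ Pi.single a 1), by simp⟩

section Bellman

variable {S A B : Type*} [Fintype S] [Fintype A] [Fintype B] {P : S → A → B → S → ℝ}
  [Nonempty B] (hP0 : ∀ s a b s', 0 ≤ P s a b s') (hP1 : ∀ s a b, ∑ s', P s a b s' = 1)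
include hP0 hP1

theorem Mpol_le_add {μ : S → A → ℝ} (hμ : ∀ s, μ s ∈ simplexSet A) {Q Q' : S → ℝ} {ε : ℝ}
    (h : ∀ s', Q s' ≤ Q' s' + ε) (s : S) :
    Mpol P μ Q s ≤ Mpol P μ Q' s + ε :=
  le_ciInf_add fun b => (ciInf_le (Set.finite_range _).bddBelow b).trans <|
    sum_mul_le_sum_mul_add (hμ s).1 (hμ s).2 fun a =>
      sum_mul_le_sum_mul_add (hP0 s a b) (hP1 s a b) h

theorem Mpol_le_norm {μ : S → A → ℝ} (hμ : ∀ s, μ s ∈ simplexSet A) (Q : S → ℝ) (s : S) :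
    Mpol P μ Q s ≤ ‖Q‖ := by
  have hQ : ∀ s', Q s' ≤ (0 : S → ℝ) s' + ‖Q‖ := fun s' =>
    (Real.le_norm_self _).trans (by simpa using norm_le_pi_norm Q s')
  simpa [Mpol] using Mpol_le_add hP0 hP1 hμ hQ s

variable [Nonempty A]

-- `Mop P Q s` unfolds to the supremum of `Mpol P (fun _ => ν) Q s` over `ν ∈ simplexSet A`.
theorem Mop_le_add {Q Q' : S → ℝ} {ε : ℝ} (h : ∀ s', Q s' ≤ Q' s' + ε) (s : S) :
    Mop P Q s ≤ Mop P Q' s + ε :=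
  csSup_image_le_csSup_image_add (simplexSet_nonempty A)
    ⟨‖Q'‖, by rintro _ ⟨ν, hν, rfl⟩; exact Mpol_le_norm hP0 hP1 (fun _ => hν) Q' s⟩
    fun _ hν => Mpol_le_add hP0 hP1 (fun _ => hν) h s

theorem Mtrunc_le_add (F : Set S) {Q Q' : S → ℝ} {ε : ℝ} (hε : 0 ≤ ε)
    (h : ∀ s', Q s' ≤ Q' s' + ε) (s : S) :
    Mtrunc P F Q s ≤ Mtrunc P F Q' s + ε := by
  unfold Mtrunc
  split_ifs
  · linarith
  · exact Mop_le_add hP0 hP1 h s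

theorem lipschitzWith_Mtrunc_apply (F : Set S) (s : S) :
    LipschitzWith 1 fun Q => Mtrunc P F Q s :=
  LipschitzWith.of_le_add fun Q Q' => by
    refine Mtrunc_le_add hP0 hP1 F dist_nonneg (fun s' => ?_) s
    have hdist : |Q s' - Q' s'| ≤ dist Q Q' :=
      (Real.dist_eq _ _).symm.trans_le (dist_le_pi_dist Q Q' s')
    linarith [le_abs_self (Q s' - Q' s')]

theorem continuous_Mtrunc (F : Set S) : Continuous (Mtrunc P F) :=
  continuous_pi fun s => (lipschitzWith_Mtrunc_apply hP0 hP1 F s).continuous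

end Bellman

theorem Mtrunc_limit_is_fixed_point_general
    {S A B : Type*} [Fintype S] [Fintype A] [Fintype B]
    [Nonempty A] [Nonempty B]
    (P : S → A → B → S → ℝ)
    (hP0 : ∀ s a b s', 0 ≤ P s a b s')
    (hP1 : ∀ s a b, ∑ s', P s a b s' = 1)
    (F : Set S) (Qstar : S → ℝ)
    (hconv : ∀ s : S,
      Filter.Tendsto (fun k : ℕ => (Mtrunc P F)^[k] (0 : S → ℝ) s) Filter.atTop (nhds (Qstar s))) :
    ∀ s, Mtrunc P F Qstar s = Qstar s :=
  congrFun <| isFixedPt_of_tendsto_iterate (tendsto_pi_nhds.2 hconv)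
    (continuous_Mtrunc hP0 hP1 F).continuousAt

/-- The limit `Q*` of value iteration is a fixed point of the truncated operator
`M̃` (the Bellman / Shapley-type equation of Proposition 3). -/
theorem Mtrunc_limit_is_fixed_point
    {S A B : Type*} [Fintype S] [Fintype A] [Fintype B]
    [Nonempty S] [Nonempty A] [Nonempty B]
    (P : S → A → B → S → ℝ)
    (hP0 : ∀ s a b s', 0 ≤ P s a b s')
    (hP1 : ∀ s a b, ∑ s', P s a b s' = 1)
    (F : Set S) (Qstar : S → ℝ)
    (hconv : ∀ s : S,
      Filter.Tendsto (fun k : ℕ => (Mtrunc P F)^[k] (0 : S → ℝ) s) Filter.atTop (nhds (Qstar s))) :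
    ∀ s, Mtrunc P F Qstar s = Qstar s :=
  Mtrunc_limit_is_fixed_point_general P hP0 hP1 F Qstar hconv
end

section
/- Let V be a type, R : V → V → Prop a relation, N ⊆ V an end component (N is nonempty, every u ∈ N has some v ∈ N with R u v, and for all u, v ∈ N the reflexive-transitive closure of the restriction R_N relates u to v), and let f ∈ N. Then there exists an infinite R-run ρ : ℕ → V such that ρ(0) = f, ρ(n) ∈ N for all n ∈ ℕ, R (ρ n) (ρ (n+1)) for all n ∈ ℕ, and the set {n ∈ ℕ : ρ(n) = f} is infinite. -/
lemma refl_trans_gen_path {V : Type*} {R' : V → V → Prop} {u v : V}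
    (h : Relation.ReflTransGen R' u v) :
    ∃ (k : ℕ) (p : ℕ → V), p 0 = u ∧ p k = v ∧ ∀ i < k, R' (p i) (p (i + 1)) := by
  induction h with
  | refl => exact ⟨0, fun _ => u, rfl, rfl, fun i hi => absurd hi (Nat.not_lt_zero i)⟩
  | @tail b c hab hbc ih =>
    obtain ⟨k, p, hp0, hpk, hpe⟩ := ih
    refine ⟨k + 1, fun i => if i = k + 1 then c else p i, by simp [hp0], by simp, ?_⟩
    intro i hi
    show R' (if i = k + 1 then c else p i) (if i + 1 = k + 1 then c else p (i + 1))
    rcases Nat.lt_or_ge i k with h' | h'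
    · rw [if_neg (by omega : i ≠ k + 1), if_neg (by omega : i + 1 ≠ k + 1)]
      exact hpe i h'
    · rw [if_neg (by omega : i ≠ k + 1), if_pos (by omega : i + 1 = k + 1),
        (by omega : i = k), hpk]
      exact hbc

/-- From any state `f` of an end component `N` there is an infinite run that
starts at `f`, stays in `N`, and visits `f` infinitely often. -/
theorem end_component_has_recurrent_run
    {V : Type*} (R : V → V → Prop) (N : Set V)
    (hne : N.Nonempty)
    (hsucc : ∀ u ∈ N, ∃ v ∈ N, R u v)
    (hconn : ∀ u ∈ N, ∀ v ∈ N,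
      Relation.ReflTransGen (fun x y : V => x ∈ N ∧ y ∈ N ∧ R x y) u v)
    (f : V) (hf : f ∈ N) :
    ∃ ρ : ℕ → V, ρ 0 = f ∧ (∀ n : ℕ, ρ n ∈ N) ∧
      (∀ n : ℕ, R (ρ n) (ρ (n + 1))) ∧ {n : ℕ | ρ n = f}.Infinite := by
  obtain ⟨v, hvN, hfv⟩ := hsucc f hf
  obtain ⟨k, p, hp0, hpk, hpe⟩ := refl_trans_gen_path (hconn v hvN f hf)
  set m := k + 1 with hm
  set q : ℕ → V := fun i => if i = 0 then f else p (i - 1) with hq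
  have hq0 : q 0 = f := by simp [hq]
  have hqm : q m = f := by simp [hq, hm, hpk]
  have hqmem : ∀ i ≤ m, q i ∈ N := by
    intro i hi
    rcases Nat.eq_zero_or_pos i with h | h
    · simpa [hq, h]
    · simp only [hq, Nat.pos_iff_ne_zero.mp h, if_false]
      rcases Nat.lt_or_ge (i - 1) k with h' | h'
      · exact (hpe (i - 1) h').1
      · have : i - 1 = k := by omega
        rw [this, hpk]; exact hf
  have hqedge : ∀ i < m, R (q i) (q (i + 1)) := by
    intro i hi
    rcases Nat.eq_zero_or_pos i with h | h
    · subst h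
      simp only [hq, if_pos rfl, Nat.one_ne_zero, if_false]
      simpa [hp0] using hfv
    · have hi1 : i ≠ 0 := Nat.pos_iff_ne_zero.mp h
      simp only [hq, hi1, if_false, Nat.succ_ne_zero, Nat.add_sub_cancel]
      have hlt : i - 1 < k := by omega
      have := hpe (i - 1) hlt
      have heq : i - 1 + 1 = i := by omega
      rw [heq] at this
      exact this.2.2
  have hmpos : 0 < m := Nat.succ_pos k
  refine ⟨fun n => q (n % m), by simpa using hq0, ?_, ?_, ?_⟩
  · intro n; exact hqmem _ (le_of_lt (Nat.mod_lt n hmpos))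
  · intro n
    show R (q (n % m)) (q ((n + 1) % m))
    have hlt : n % m < m := Nat.mod_lt n hmpos
    have key : (n % m + 1) % m = (n + 1) % m := Nat.mod_add_mod n m 1
    rcases Nat.lt_or_ge (n % m + 1) m with h | h
    · rw [← key, Nat.mod_eq_of_lt h]
      exact hqedge _ hlt
    · have heq : n % m + 1 = m := by omega
      rw [← key, heq, Nat.mod_self, hq0]
      have := hqedge _ hlt
      rw [heq, hqm] at this
      exact this
  · refine Set.infinite_of_injective_forall_mem
      (f := fun j : ℕ => j * m) ?_ ?_
    · intro a b hab
      exact Nat.eq_of_mul_eq_mul_right hmpos hab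
    · intro j
      simp only [Set.mem_setOf_eq, Nat.mul_mod_left, hq0]
end
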